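/- Let C be a u×u real matrix, and let Q₁, Q₂ be u×u permutation matrices such that the matrix D = Q₁ᵀ C Q₂ has every diagonal entry at most a and every off-diagonal entry at least b, where a < b. Then the unique minimizer of Q ↦ tr(C·Q) over u×u permutation matrices is Q₂Q₁ᵀ. -/
import Mathlib


open Matrix

/-- If `D = Q₁ᵀ C Q₂` has diagonal entries at most `a` and off-diagonal
entries at least `b` with `a < b`, then `Q₂ Q₁ᵀ` is the unique minimizer of
`Q ↦ tr (C * Q)` over permutation matrices. -/
theorem stmt1 (u : ℕ) (C : Matrix (Fin u) (Fin u) ℝ) (a b : ℝ) (hab : a < b)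
    (σ₁ σ₂ : Equiv.Perm (Fin u))
    (hdiag : ∀ i, ((Equiv.Perm.permMatrix ℝ σ₁)ᵀ * C * Equiv.Perm.permMatrix ℝ σ₂) i i ≤ a)
    (hoff : ∀ i j, i ≠ j →
      b ≤ ((Equiv.Perm.permMatrix ℝ σ₁)ᵀ * C * Equiv.Perm.permMatrix ℝ σ₂) i j) :
    (∀ σ : Equiv.Perm (Fin u),
      Matrix.trace (C * (Equiv.Perm.permMatrix ℝ σ₂ * (Equiv.Perm.permMatrix ℝ σ₁)ᵀ)) ≤
        Matrix.trace (C * Equiv.Perm.permMatrix ℝ σ)) ∧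
    (∀ σ : Equiv.Perm (Fin u),
      Equiv.Perm.permMatrix ℝ σ ≠ Equiv.Perm.permMatrix ℝ σ₂ * (Equiv.Perm.permMatrix ℝ σ₁)ᵀ →
      Matrix.trace (C * (Equiv.Perm.permMatrix ℝ σ₂ * (Equiv.Perm.permMatrix ℝ σ₁)ᵀ)) <
        Matrix.trace (C * Equiv.Perm.permMatrix ℝ σ)) := by
  set D := (Equiv.Perm.permMatrix ℝ σ₁)ᵀ * C * Equiv.Perm.permMatrix ℝ σ₂ with hD
  have h1 : (Equiv.Perm.permMatrix ℝ σ₁)ᵀ = Equiv.Perm.permMatrix ℝ σ₁.symm := by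
    rw [Equiv.Perm.permMatrix, Equiv.Perm.permMatrix, Equiv.toPEquiv_symm,
      PEquiv.toMatrix_symm]
  have hDs : ∀ i j, D i j = C (σ₁.symm i) (σ₂.symm j) := by
    intro i j
    rw [hD, h1, Equiv.Perm.permMatrix, Equiv.Perm.permMatrix,
      PEquiv.toMatrix_toPEquiv_mul, PEquiv.mul_toMatrix_toPEquiv]
    simp
  -- trace formula
  have htr : ∀ σ : Equiv.Perm (Fin u),
      Matrix.trace (C * Equiv.Perm.permMatrix ℝ σ) = ∑ i, C i (σ.symm i) := by
    intro σ
    rw [Equiv.Perm.permMatrix, PEquiv.mul_toMatrix_toPEquiv, Matrix.trace]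
    simp [Matrix.diag]
  have key : ∀ σ : Equiv.Perm (Fin u),
      Matrix.trace (C * Equiv.Perm.permMatrix ℝ σ) =
        ∑ k, D k (σ₂ (σ.symm (σ₁.symm k))) := by
    intro σ
    rw [htr σ]
    refine Fintype.sum_bijective σ₁ σ₁.bijective _ _ ?_
    intro i
    rw [hDs]
    simp
  -- the product is the perm matrix of σ₂.trans σ₁.symm
  have hmul : Equiv.Perm.permMatrix ℝ σ₂ * (Equiv.Perm.permMatrix ℝ σ₁)ᵀ =
      Equiv.Perm.permMatrix ℝ (σ₂.trans σ₁.symm) := by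
    rw [h1, Equiv.Perm.permMatrix, Equiv.Perm.permMatrix, Equiv.Perm.permMatrix,
      Equiv.toPEquiv_trans, PEquiv.toMatrix_trans]
  have keystar : Matrix.trace
      (C * (Equiv.Perm.permMatrix ℝ σ₂ * (Equiv.Perm.permMatrix ℝ σ₁)ᵀ)) = ∑ k, D k k := by
    rw [hmul, key (σ₂.trans σ₁.symm)]
    congr 1
    ext k
    simp
  -- pointwise inequality
  have hpt : ∀ (σ : Equiv.Perm (Fin u)) (k : Fin u),
      D k k ≤ D k (σ₂ (σ.symm (σ₁.symm k))) := by
    intro σ k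
    by_cases h : σ₂ (σ.symm (σ₁.symm k)) = k
    · rw [h]
    · exact le_trans (hdiag k) (le_trans hab.le
        (hoff k _ (fun he => h he.symm)))
  constructor
  · intro σ
    rw [keystar, key σ]
    exact Finset.sum_le_sum fun k _ => hpt σ k
  · intro σ hne
    rw [keystar, key σ]
    -- find a point where strict
    have hex : ∃ k, σ₂ (σ.symm (σ₁.symm k)) ≠ k := by
      by_contra hcon
      push_neg at hcon
      apply hne
      rw [hmul]
      have hσ : σ = σ₂.trans σ₁.symm := by
        ext x
        have := hcon (σ₂ x)
        have h2 : σ.symm (σ₁.symm (σ₂ x)) = x := by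
          apply σ₂.injective
          simpa using this
        have h3 := congrArg σ h2
        simp only [Equiv.trans_apply]
        simp at h3
        exact congrArg Fin.val h3.symm
      rw [hσ]
    obtain ⟨k, hk⟩ := hex
    refine Finset.sum_lt_sum (fun i _ => hpt σ i) ⟨k, Finset.mem_univ k, ?_⟩
    exact lt_of_le_of_lt (hdiag k) (lt_of_lt_of_le hab
      (hoff k _ (fun he => hk he.symm)))
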